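/- arXiv:1301.2418 — 2 statements merged into one kernel-verified Lean document; each statement's English description precedes it below -/
import Mathlib

section
/- Let $k$ be a field and let $I$ be an ideal of $k[t,X_1,\ldots,X_n]$. Suppose $\sqrt{I} = P_1 \cap \cdots \cap P_s$ with $P_1,\ldots,P_s$ prime ideals, and let $e \ge 1$ be an integer with $\sqrt{I}^e \subseteq I$. Fix positive integers $c_1, \ldots, c_s$ and set $\beta' := e \cdot \sum_{l=1}^s c_l$. If $x(t) \in k[[t]]^n$ satisfies $f(t, x(t)) \in (t)^{\beta'}$ for all $f \in I$, then there exists an index $l$ such that $g(t, x(t)) \in (t)^{c_l}$ for all $g \in P_l$. -/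
/-!
If no `P l` were approximately satisfied to order `c l`, pick `g l ∈ P l` whose evaluation has
order `< c l`. The product `G = ∏ g l` lies in `⋂ P l = √I`, so `G ^ e ∈ I`, while the order of
the evaluation of `G ^ e` is `e * ∑ ord (g l) < e * ∑ c l`, since the order of power series is
additive.
-/

/-- Evaluation of `f ∈ k[t,X₁,…,Xₙ]` at `(t, x₁(t),…,xₙ(t))`: variable `0` is `t`. -/
noncomputable def evalAt {k : Type*} [Field k] {n : ℕ} (x : Fin n → PowerSeries k) :
    MvPolynomial (Fin (n + 1)) k →ₐ[k] PowerSeries k :=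
  MvPolynomial.aeval (Fin.cases PowerSeries.X x)

theorem Ideal.prod_mem_iInf {R ι : Type*} [CommSemiring R] [Fintype ι] {P : ι → Ideal R}
    {g : ι → R} (hg : ∀ i, g i ∈ P i) : ∏ i, g i ∈ ⨅ i, P i :=
  Ideal.mem_iInf.2 fun i => Ideal.mem_of_dvd _ (Finset.dvd_prod_of_mem g (Finset.mem_univ i)) (hg i)

namespace PowerSeries

theorem X_pow_dvd_iff_le_order {R : Type*} [Semiring R] {φ : R⟦X⟧} {m : ℕ} :
    X ^ m ∣ φ ↔ (m : ℕ∞) ≤ φ.order := by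
  rw [order_eq_emultiplicity_X, pow_dvd_iff_le_emultiplicity]

theorem not_X_pow_mul_dvd_pow {R : Type*} [Semiring R] [NoZeroDivisors R] [Nontrivial R]
    {φ : R⟦X⟧} {m e : ℕ} (hφ : ¬ X ^ m ∣ φ) (he : 0 < e) : ¬ X ^ (e * m) ∣ φ ^ e := by
  rw [X_pow_dvd_iff_le_order, not_le] at hφ ⊢
  rw [order_pow, nsmul_eq_mul]
  lift φ.order to ℕ using (hφ.trans (ENat.natCast_lt_top m)).ne with o
  norm_cast at hφ ⊢
  exact Nat.mul_lt_mul_of_pos_left hφ he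

theorem not_X_pow_sum_dvd_prod {R ι : Type*} [CommSemiring R] [NoZeroDivisors R] [Nontrivial R]
    {t : Finset ι} (ht : t.Nonempty) {φ : ι → R⟦X⟧} {c : ι → ℕ}
    (hφ : ∀ i ∈ t, ¬ X ^ c i ∣ φ i) : ¬ X ^ (∑ i ∈ t, c i) ∣ ∏ i ∈ t, φ i := by
  simp_rw [X_pow_dvd_iff_le_order, not_le, order_prod, Nat.cast_sum] at hφ ⊢
  exact ENat.sum_lt_sum_of_nonempty ht hφ

end PowerSeries

theorem approx_solution_of_some_minimal_prime_general
    {k : Type*} [Field k] {n s : ℕ} (hs : 0 < s)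
    (I : Ideal (MvPolynomial (Fin (n + 1)) k))
    (P : Fin s → Ideal (MvPolynomial (Fin (n + 1)) k))
    (hrad : I.radical = ⨅ l, P l)
    (e : ℕ) (he : 1 ≤ e) (hpow : I.radical ^ e ≤ I)
    (c : Fin s → ℕ)
    (x : Fin n → PowerSeries k)
    (hx : ∀ f ∈ I, (PowerSeries.X : PowerSeries k) ^ (e * ∑ l, c l) ∣ evalAt x f) :
    ∃ l, ∀ g ∈ P l, (PowerSeries.X : PowerSeries k) ^ (c l) ∣ evalAt x g := by
  by_contra! h
  choose g hgP hg using h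
  have hG_mem_radical : ∏ l, g l ∈ I.radical := hrad ▸ Ideal.prod_mem_iInf hgP
  have hG_pow_mem : (∏ l, g l) ^ e ∈ I := hpow (Ideal.pow_mem_pow hG_mem_radical e)
  have hG_eval : ¬ PowerSeries.X ^ (∑ l, c l) ∣ ∏ l, evalAt x (g l) :=
    PowerSeries.not_X_pow_sum_dvd_prod (Finset.univ_nonempty_iff.2 ⟨⟨0, hs⟩⟩) fun l _ => hg l
  exact PowerSeries.not_X_pow_mul_dvd_pow hG_eval he
    (by simpa only [map_pow, map_prod] using hx _ hG_pow_mem)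

theorem approx_solution_of_some_minimal_prime
    {k : Type*} [Field k] {n s : ℕ} (hs : 0 < s)
    (I : Ideal (MvPolynomial (Fin (n + 1)) k))
    (P : Fin s → Ideal (MvPolynomial (Fin (n + 1)) k))
    (hP : ∀ l, (P l).IsPrime) (hrad : I.radical = ⨅ l, P l)
    (e : ℕ) (he : 1 ≤ e) (hpow : I.radical ^ e ≤ I)
    (c : Fin s → ℕ) (hc : ∀ l, 0 < c l)
    (x : Fin n → PowerSeries k)
    (hx : ∀ f ∈ I, (PowerSeries.X : PowerSeries k) ^ (e * ∑ l, c l) ∣ evalAt x f) :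
    ∃ l, ∀ g ∈ P l, (PowerSeries.X : PowerSeries k) ^ (c l) ∣ evalAt x g :=
  approx_solution_of_some_minimal_prime_general hs I P hrad e he hpow c x hx
end

section
/- Let $k$ be a field, let $f = aX^{\alpha} + bX^{\beta} \in k[X_1,\ldots,X_n]$ be a binomial with $a, b \in k$ and multi-exponents $\alpha, \beta \in \mathbb{N}^n$. Let $x_j(t,z) = u_j(t,z) W_j(t,z)$ for $1 \le j \le n$, where each $u_j$ is a unit in $k[[t,z]]$ and each $W_j$ is a Weierstrass polynomial in $z$ of degree $d_j$ with coefficients in $(t)k[[t]]$. Set $D_\alpha := \sum_j \alpha_j d_j$ and $D_\beta := \sum_j \beta_j d_j$. If $f(x_1,\ldots,x_n) \in (t,z)^i$ with $i > \max(D_\alpha, D_\beta)$, and $a, b$ are both nonzero, then $D_\alpha = D_\beta$. -/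
/-!
Setting `t = 0`, i.e. applying `PowerSeries.map constantCoeff`, kills the lower coefficients of each
Weierstrass polynomial `W_j`, so `x_j` becomes a unit times `z ^ d_j` and `f(x)` becomes
`U z ^ D_α + V z ^ D_β` with units `U, V`. If `D_α ≠ D_β`, the coefficient of `z ^ min(D_α, D_β)`
is the constant term of a unit, which is nonzero although `min(D_α, D_β) < i`.
-/

/-- `F ∈ (t,z)^i` in `k[[t,z]] = (k[[t]])[[z]]`: all coefficients of
total degree `< i` vanish.  Here `b` is the exponent of `z` and `a` that of `t`. -/
def Mem2 {k : Type*} [Field k] (i : ℕ) (F : PowerSeries (PowerSeries k)) : Prop :=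
  ∀ a b : ℕ, a + b < i → PowerSeries.coeff a (PowerSeries.coeff b F) = 0

open PowerSeries Finset

namespace PowerSeries

variable {R : Type*} [CommRing R]

theorem coeff_mul_X_pow_add_mul_X_pow_of_lt (U V : R⟦X⟧) {D E : ℕ} (hDE : D < E) :
    coeff D (U * X ^ D + V * X ^ E) = constantCoeff U := by
  simp [coeff_mul_X_pow', hDE.not_ge]

theorem eq_of_coeff_mul_X_pow_add_mul_X_pow_eq_zero [Nontrivial R] {U V : R⟦X⟧}
    (hU : IsUnit U) (hV : IsUnit V) {D E i : ℕ} (hi : max D E < i)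
    (h : ∀ m < i, coeff m (U * X ^ D + V * X ^ E) = 0) : D = E := by
  by_contra hne
  rcases lt_or_gt_of_ne hne with hlt | hlt
  · apply (isUnit_constantCoeff U hU).ne_zero
    rw [← coeff_mul_X_pow_add_mul_X_pow_of_lt U V hlt]
    exact h D (lt_of_le_of_lt (le_max_left D E) hi)
  · apply (isUnit_constantCoeff V hV).ne_zero
    rw [← coeff_mul_X_pow_add_mul_X_pow_of_lt V U hlt, add_comm]
    exact h E (lt_of_le_of_lt (le_max_right D E) hi)

theorem map_constantCoeff_sum_C_mul_X_pow_add_X_pow {d : ℕ} (c : Fin d → R⟦X⟧)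
    (hc : ∀ l, constantCoeff (c l) = 0) :
    map constantCoeff (∑ l : Fin d, C (c l) * X ^ (l : ℕ) + X ^ d) = (X : R⟦X⟧) ^ d := by
  simp [hc]

theorem map_constantCoeff_algebraMap (r : R) :
    map constantCoeff (algebraMap R R⟦X⟧⟦X⟧ r) = C r := by
  simp [algebraMap_apply]

end PowerSeries

theorem Finset.prod_mul_pow_pow {ι M : Type*} [CommMonoid M] (s : Finset ι) (v : ι → M) (y : M)
    (d γ : ι → ℕ) :
    ∏ j ∈ s, (v j * y ^ d j) ^ γ j = (∏ j ∈ s, v j ^ γ j) * y ^ ∑ j ∈ s, γ j * d j := by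
  simp only [mul_pow, ← pow_mul, prod_mul_distrib, prod_pow_eq_pow_sum, mul_comm (d _)]

theorem Mem2.coeff_map_constantCoeff_eq_zero {k : Type*} [Field k] {i : ℕ} {F : k⟦X⟧⟦X⟧}
    (h : Mem2 i F) {m : ℕ} (hm : m < i) : coeff m (map constantCoeff F) = 0 := by
  rw [coeff_map, ← coeff_zero_eq_constantCoeff_apply]
  exact h 0 m (by omega)

theorem binomial_weierstrass_degrees_match
    {k : Type*} [Field k] {n : ℕ}
    (a b : k) (ha : a ≠ 0) (hb : b ≠ 0) (α β : Fin n → ℕ)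
    (u : Fin n → PowerSeries (PowerSeries k)) (hu : ∀ j, IsUnit (u j))
    (d : Fin n → ℕ) (c : (j : Fin n) → Fin (d j) → PowerSeries k)
    (hc : ∀ j l, (PowerSeries.X : PowerSeries k) ∣ c j l)
    (x : Fin n → PowerSeries (PowerSeries k))
    (hx : ∀ j, x j = u j * (∑ l : Fin (d j), PowerSeries.C (c j l)
        * PowerSeries.X ^ (l : ℕ) + PowerSeries.X ^ (d j)))
    (i : ℕ) (hi : max (∑ j, α j * d j) (∑ j, β j * d j) < i)
    (h : Mem2 i (algebraMap k _ a * ∏ j, x j ^ α j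
        + algebraMap k _ b * ∏ j, x j ^ β j)) :
    ∑ j, α j * d j = ∑ j, β j * d j := by
  let φ : k⟦X⟧⟦X⟧ →+* k⟦X⟧ := map constantCoeff
  have hxφ : ∀ j, φ (x j) = φ (u j) * X ^ d j := fun j => by
    rw [hx j, map_mul,
      map_constantCoeff_sum_C_mul_X_pow_add_X_pow _ fun l => X_dvd_iff.mp (hc j l)]
  have hunit : ∀ r : k, r ≠ 0 → ∀ γ : Fin n → ℕ, IsUnit (C r * ∏ j, φ (u j) ^ γ j) :=
    fun r hr γ => (isUnit_iff_ne_zero.mpr hr).map C |>.mul <|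
      IsUnit.prod_univ_iff.mpr fun j => ((hu j).map φ).pow _
  refine eq_of_coeff_mul_X_pow_add_mul_X_pow_eq_zero (hunit a ha α) (hunit b hb β) hi
    fun m hm => ?_
  have hφF : φ (algebraMap k _ a * ∏ j, x j ^ α j + algebraMap k _ b * ∏ j, x j ^ β j) =
      (C a * ∏ j, φ (u j) ^ α j) * X ^ ∑ j, α j * d j
        + (C b * ∏ j, φ (u j) ^ β j) * X ^ ∑ j, β j * d j := by
    simp only [map_add, map_mul, map_prod, map_pow, hxφ, prod_mul_pow_pow,
      map_constantCoeff_algebraMap, φ, mul_assoc]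
  rw [← hφF]
  exact h.coeff_map_constantCoeff_eq_zero hm
end
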